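/- Let d ≥ 1, 1 ≤ s ≤ d, γ > 1, λ > 0, κ > 0, and set c₀ = (γ+1)/(γ−1). Let Ĉ be a real d×d symmetric positive semidefinite matrix and ε a real d×d matrix such that: (i) for every u in the cone C(s,c₀), uᵀĈu ≥ κ²·‖u‖₂²; and (ii) every entry of ε has absolute value at most λ/γ. Let A₀ be a row-s-sparse d×d matrix and let Â be a minimizer over d×d matrices of L(A) = tr(Aᵀε) + ½·tr((A−A₀)Ĉ(A−A₀)ᵀ) + λ·|A|₁. Then √(tr((Â−A₀)Ĉ(Â−A₀)ᵀ)) ≤ ((1+γ)/(γκ))·λ·√(d·s). -/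

import Mathlib

/-
With `Δ = Ahat - A₀`, minimality of `Ahat` along the segment towards `A₀` yields the basic
inequality `tr(Δ Ĉ Δᵀ) ≤ tr((A₀ - Ahat)ᵀ ε) + λ (|A₀|₁ - |Ahat|₁)`. Both terms split over rows: with
`Sᵢ` the support of row `i` of `A₀` (at most `s` entries), row `i` contributes at most
`λ/γ |Δᵢ|₁ + λ (|Δᵢ on Sᵢ|₁ - |Δᵢ off Sᵢ|₁)`. Such a term is either nonpositive or forces `Δᵢ` into
the cone `C(s, c₀)`, where the restricted eigenvalue condition and Cauchy–Schwarz on `Sᵢ` bound it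
by `(1 + γ)/(γ κ) λ √s √(Δᵢᵀ Ĉ Δᵢ)`. Cauchy–Schwarz over the `d` rows then gives
`Q ≤ (1 + γ)/(γ κ) λ √(d s) √Q` for `Q = tr(Δ Ĉ Δᵀ)`.
-/

open Matrix

/-- Entrywise ℓ¹ norm of a matrix. -/
noncomputable def matL1 {d : ℕ} (M : Matrix (Fin d) (Fin d) ℝ) : ℝ :=
  ∑ i, ∑ j, |M i j|

/-- The Lasso objective `L(A) = tr(Aᵀ ε) + ½ tr((A - A₀) Ĉ (A - A₀)ᵀ) + λ |A|₁`. -/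
noncomputable def lassoObj {d : ℕ} (Chat eps A₀ : Matrix (Fin d) (Fin d) ℝ) (lam : ℝ)
    (A : Matrix (Fin d) (Fin d) ℝ) : ℝ :=
  (Aᵀ * eps).trace + (1 / 2) * ((A - A₀) * Chat * (A - A₀)ᵀ).trace + lam * matL1 A

/-- The cone `C(s, c₀)`: vectors whose ℓ¹ norm is at most `(1 + c₀)` times the ℓ¹ norm
of their `s` largest (in absolute value) entries. -/
def inCone {d : ℕ} (s : ℕ) (c₀ : ℝ) (u : Fin d → ℝ) : Prop :=
  ∃ I : Finset (Fin d), I.card = s ∧ (∀ i ∈ I, ∀ j ∉ I, |u j| ≤ |u i|) ∧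
    ∑ j, |u j| ≤ (1 + c₀) * ∑ i ∈ I, |u i|

/-- A matrix is row-`s`-sparse if every row has at most `s` nonzero entries. -/
def rowSparse {d : ℕ} (s : ℕ) (A : Matrix (Fin d) (Fin d) ℝ) : Prop :=
  ∀ i, {j | A i j ≠ 0}.ncard ≤ s

lemma exists_top_finset {ι : Type*} [Fintype ι] (f : ι → ℝ) {s : ℕ}
    (hs : s ≤ Fintype.card ι) :
    ∃ I : Finset ι, I.card = s ∧ (∀ i ∈ I, ∀ j ∉ I, f j ≤ f i) ∧
      ∀ J : Finset ι, J.card = s → ∑ j ∈ J, f j ≤ ∑ i ∈ I, f i := by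
  classical
  obtain ⟨I, hI, hImax⟩ := Finset.exists_max_image ((Finset.univ : Finset ι).powersetCard s)
    (fun J => ∑ i ∈ J, f i) (Finset.powersetCard_nonempty.2 (by simpa using hs))
  have hIcard : I.card = s := (Finset.mem_powersetCard.1 hI).2
  have hmax : ∀ J : Finset ι, J.card = s → ∑ j ∈ J, f j ≤ ∑ i ∈ I, f i := fun J hJ =>
    hImax J (Finset.mem_powersetCard.2 ⟨Finset.subset_univ _, hJ⟩)
  refine ⟨I, hIcard, fun i hi j hj => ?_, hmax⟩
  -- otherwise exchanging `i` for `j` would increase the sum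
  have hj' : j ∉ I.erase i := fun h => hj (Finset.mem_of_mem_erase h)
  have hswap := hmax (insert j (I.erase i)) (by
    have := Finset.card_pos.2 ⟨i, hi⟩
    rw [Finset.card_insert_of_notMem hj', Finset.card_erase_of_mem hi]
    omega)
  rw [Finset.sum_insert hj', Finset.sum_erase_eq_sub hi] at hswap
  linarith

lemma inCone_of_sum_compl_le {d s : ℕ} (hsd : s ≤ d) {c₀ : ℝ} (hc₀ : 0 ≤ 1 + c₀)
    (u : Fin d → ℝ) (S : Finset (Fin d)) (hS : S.card ≤ s)
    (h : ∑ j ∈ Sᶜ, |u j| ≤ c₀ * ∑ j ∈ S, |u j|) : inCone s c₀ u := by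
  obtain ⟨I, hIcard, hItop, hImax⟩ := exists_top_finset (fun j => |u j|) (s := s) (by simpa)
  obtain ⟨J, hSJ, -, hJcard⟩ :=
    Finset.exists_subsuperset_card_eq (Finset.subset_univ S) hS (by simpa)
  have hSI : ∑ j ∈ S, |u j| ≤ ∑ j ∈ I, |u j| :=
    (Finset.sum_le_sum_of_subset_of_nonneg hSJ fun _ _ _ => abs_nonneg _).trans
      (hImax J hJcard)
  refine ⟨I, hIcard, hItop, ?_⟩
  calc ∑ j, |u j| = ∑ j ∈ S, |u j| + ∑ j ∈ Sᶜ, |u j| := (Finset.sum_add_sum_compl S _).symm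
    _ ≤ (1 + c₀) * ∑ j ∈ S, |u j| := by linarith
    _ ≤ (1 + c₀) * ∑ j ∈ I, |u j| := mul_le_mul_of_nonneg_left hSI hc₀

lemma sum_abs_le_sqrt_mul_sqrt_sum_sq {ι : Type*} [Fintype ι] (u : ι → ℝ) (S : Finset ι) :
    ∑ j ∈ S, |u j| ≤ √(S.card : ℝ) * √(∑ j, u j ^ 2) := by
  rw [← Real.sqrt_mul (Nat.cast_nonneg _)]
  refine Real.le_sqrt_of_sq_le (sq_sum_le_card_mul_sum_sq.trans ?_)
  gcongr
  simpa only [sq_abs] using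
    Finset.sum_le_sum_of_subset_of_nonneg (Finset.subset_univ S) fun _ _ _ => sq_nonneg _

lemma trace_mul_mul_transpose_eq_sum {m n : Type*} [Fintype m] [Fintype n]
    (Δ : Matrix m n ℝ) (C : Matrix n n ℝ) :
    (Δ * C * Δᵀ).trace = ∑ i, Δ i ⬝ᵥ C *ᵥ Δ i := by
  simp only [Matrix.trace, Matrix.diag_apply, Matrix.mul_apply', dotProduct_mulVec]
  rfl

lemma trace_transpose_mul_le_mul_matL1 {d : ℕ} (D eps : Matrix (Fin d) (Fin d) ℝ) {b : ℝ}
    (heps : ∀ i j, |eps i j| ≤ b) : (Dᵀ * eps).trace ≤ b * matL1 D := by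
  simp only [Matrix.trace, Matrix.diag_apply, Matrix.mul_apply, Matrix.transpose_apply, matL1,
    Finset.mul_sum]
  rw [Finset.sum_comm]
  refine Finset.sum_le_sum fun i _ => Finset.sum_le_sum fun j _ => ?_
  calc D i j * eps i j ≤ |D i j| * |eps i j| := (le_abs_self _).trans (abs_mul _ _).le
    _ ≤ b * |D i j| := by rw [mul_comm]; gcongr; exact heps i j

lemma matL1_add_le {d : ℕ} (A B : Matrix (Fin d) (Fin d) ℝ) :
    matL1 (A + B) ≤ matL1 A + matL1 B := by
  simp only [matL1, ← Finset.sum_add_distrib, Matrix.add_apply]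
  gcongr
  exact abs_add_le _ _

lemma matL1_smul {d : ℕ} (c : ℝ) (A : Matrix (Fin d) (Fin d) ℝ) :
    matL1 (c • A) = |c| * matL1 A := by
  simp only [matL1, Finset.mul_sum, Matrix.smul_apply, smul_eq_mul, abs_mul]

lemma le_of_forall_one_sub_half_mul_le {Q R : ℝ}
    (h : ∀ t ∈ Set.Ioc (0 : ℝ) 1, (1 - t / 2) * Q ≤ R) : Q ≤ R := by
  have hlim : Filter.Tendsto (fun t : ℝ => (1 - t / 2) * Q) (nhdsWithin 0 (Set.Ioi 0)) (nhds Q) :=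
    tendsto_nhdsWithin_of_tendsto_nhds <| by
      simpa using ((continuous_const.sub (continuous_id.div_const 2)).mul
        continuous_const).tendsto (0 : ℝ) (f := fun t : ℝ => (1 - t / 2) * Q)
  exact le_of_tendsto hlim (Filter.mem_of_superset (Ioc_mem_nhdsGT one_pos) h)

/-- Comparing `Ahat` with points of the segment towards `A₀` that approach `Ahat` (rather than with
`A₀` itself) gives the quadratic term with weight `1` instead of `½`. -/
lemma lasso_basic_inequality {d : ℕ} {Chat eps A₀ Ahat : Matrix (Fin d) (Fin d) ℝ} {lam : ℝ}
    (hlam : 0 ≤ lam)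
    (hmin : ∀ A, lassoObj Chat eps A₀ lam Ahat ≤ lassoObj Chat eps A₀ lam A) :
    ((Ahat - A₀) * Chat * (Ahat - A₀)ᵀ).trace ≤
      ((A₀ - Ahat)ᵀ * eps).trace + lam * (matL1 A₀ - matL1 Ahat) := by
  refine le_of_forall_one_sub_half_mul_le fun t ⟨ht0, ht1⟩ => ?_
  have hlin : ((Ahat + t • (A₀ - Ahat))ᵀ * eps).trace =
      (Ahatᵀ * eps).trace + t * ((A₀ - Ahat)ᵀ * eps).trace := by
    rw [Matrix.transpose_add, Matrix.add_mul, Matrix.trace_add, Matrix.transpose_smul,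
      Matrix.smul_mul, Matrix.trace_smul, smul_eq_mul]
  have hquad : ((Ahat + t • (A₀ - Ahat) - A₀) * Chat * (Ahat + t • (A₀ - Ahat) - A₀)ᵀ).trace =
      (1 - t) ^ 2 * ((Ahat - A₀) * Chat * (Ahat - A₀)ᵀ).trace := by
    rw [show Ahat + t • (A₀ - Ahat) - A₀ = (1 - t) • (Ahat - A₀) by module,
      Matrix.transpose_smul, Matrix.smul_mul, Matrix.smul_mul, Matrix.mul_smul,
      Matrix.trace_smul, Matrix.trace_smul, smul_eq_mul, smul_eq_mul]
    ring
  have hl1 : matL1 (Ahat + t • (A₀ - Ahat)) ≤ (1 - t) * matL1 Ahat + t * matL1 A₀ := by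
    rw [show Ahat + t • (A₀ - Ahat) = (1 - t) • Ahat + t • A₀ by module]
    refine (matL1_add_le _ _).trans_eq ?_
    rw [matL1_smul, matL1_smul, abs_of_nonneg (by linarith), abs_of_pos ht0]
  have h := hmin (Ahat + t • (A₀ - Ahat))
  simp only [lassoObj, hlin, hquad] at h
  have hmul : t * ((1 - t / 2) * ((Ahat - A₀) * Chat * (Ahat - A₀)ᵀ).trace) ≤
      t * (((A₀ - Ahat)ᵀ * eps).trace + lam * (matL1 A₀ - matL1 Ahat)) := by
    nlinarith [mul_le_mul_of_nonneg_left hl1 hlam]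
  exact le_of_mul_le_mul_left hmul ht0

lemma sum_abs_sub_sum_abs_le {ι : Type*} [Fintype ι] [DecidableEq ι] (v w : ι → ℝ)
    (S : Finset ι) (hv : ∀ j ∉ S, v j = 0) :
    ∑ j, |v j| - ∑ j, |w j| ≤ ∑ j ∈ S, |w j - v j| - ∑ j ∈ Sᶜ, |w j - v j| := by
  rw [← Finset.sum_sub_distrib, ← Finset.sum_add_sum_compl S, sub_eq_add_neg,
    ← Finset.sum_neg_distrib]
  gcongr with j _ j hj
  · rw [abs_sub_comm]; exact abs_sub_abs_le_abs_sub _ _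
  · rw [hv j (Finset.mem_compl.1 hj)]; simp

lemma lasso_error_le_sum_rows {d : ℕ} {Chat eps A₀ Ahat : Matrix (Fin d) (Fin d) ℝ}
    {lam b : ℝ} (hlam : 0 ≤ lam) (heps : ∀ i j, |eps i j| ≤ b)
    (hmin : ∀ A, lassoObj Chat eps A₀ lam Ahat ≤ lassoObj Chat eps A₀ lam A)
    (S : Fin d → Finset (Fin d)) (hS : ∀ i, ∀ j ∉ S i, A₀ i j = 0) :
    ((Ahat - A₀) * Chat * (Ahat - A₀)ᵀ).trace ≤
      ∑ i, (b * ∑ j, |(Ahat - A₀) i j| +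
        lam * (∑ j ∈ S i, |(Ahat - A₀) i j| - ∑ j ∈ (S i)ᶜ, |(Ahat - A₀) i j|)) := by
  have hnoise := trace_transpose_mul_le_mul_matL1 (A₀ - Ahat) eps heps
  have hl1 : matL1 A₀ - matL1 Ahat ≤
      ∑ i, (∑ j ∈ S i, |(Ahat - A₀) i j| - ∑ j ∈ (S i)ᶜ, |(Ahat - A₀) i j|) := by
    rw [matL1, matL1, ← Finset.sum_sub_distrib]
    exact Finset.sum_le_sum fun i _ => sum_abs_sub_sum_abs_le (A₀ i) (Ahat i) (S i) (hS i)
  have hsymm : matL1 (A₀ - Ahat) = ∑ i, ∑ j, |(Ahat - A₀) i j| := by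
    rw [← neg_sub, ← neg_one_smul ℝ, matL1_smul, abs_neg, abs_one, one_mul, matL1]
  rw [Finset.sum_add_distrib, ← Finset.mul_sum, ← Finset.mul_sum, ← hsymm]
  exact (lasso_basic_inequality hlam hmin).trans (by gcongr)

lemma sqrt_sum_le_mul_sqrt_card {ι : Type*} [Fintype ι] {q : ι → ℝ} (hq : ∀ i, 0 ≤ q i)
    {K : ℝ} (hK : 0 ≤ K) (h : ∑ i, q i ≤ K * ∑ i, √(q i)) :
    √(∑ i, q i) ≤ K * √(Fintype.card ι) := by
  have hQ : 0 ≤ ∑ i, q i := Finset.sum_nonneg fun i _ => hq i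
  have hCS : ∑ i, √(q i) ≤ √(Fintype.card ι) * √(∑ i, q i) := by
    rw [← Real.sqrt_mul (Nat.cast_nonneg _)]
    refine Real.le_sqrt_of_sq_le (sq_sum_le_card_mul_sum_sq.trans_eq ?_)
    simp only [Real.sq_sqrt (hq _), Finset.card_univ]
  have hsq : √(∑ i, q i) * √(∑ i, q i) ≤ K * √(Fintype.card ι) * √(∑ i, q i) := by
    rw [Real.mul_self_sqrt hQ, mul_assoc]
    exact h.trans (by gcongr)
  rcases (Real.sqrt_nonneg (∑ i, q i)).eq_or_lt with h0 | hpos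
  · rw [← h0]; positivity
  · exact le_of_mul_le_mul_right hsq hpos

lemma lasso_row_le_mul_sqrt {d s : ℕ} (hsd : s ≤ d) {γ lam κ c₀ : ℝ} (hγ : 1 < γ) (hlam : 0 < lam)
    (hκ : 0 < κ) (hc₀ : c₀ = (γ + 1) / (γ - 1)) (u : Fin d → ℝ) (S : Finset (Fin d))
    (hS : S.card ≤ s) {q : ℝ} (hRE : inCone s c₀ u → κ ^ 2 * ∑ j, u j ^ 2 ≤ q) :
    lam / γ * ∑ j, |u j| + lam * (∑ j ∈ S, |u j| - ∑ j ∈ Sᶜ, |u j|) ≤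
      (1 + γ) / (γ * κ) * lam * √s * √q := by
  set a := ∑ j ∈ S, |u j|
  set b := ∑ j ∈ Sᶜ, |u j|
  have hb : 0 ≤ b := Finset.sum_nonneg fun _ _ => abs_nonneg _
  have hrow : lam / γ * ∑ j, |u j| + lam * (a - b) = lam / γ * ((1 + γ) * a - (γ - 1) * b) := by
    rw [← Finset.sum_add_sum_compl S]
    field_simp
    ring
  rw [hrow]
  rcases le_or_gt ((1 + γ) * a - (γ - 1) * b) 0 with hneg | hpos
  · exact (mul_nonpos_of_nonneg_of_nonpos (by positivity) hneg).trans (by positivity)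
  have hcone : inCone s c₀ u := by
    refine inCone_of_sum_compl_le hsd ?_ u S hS ?_
    · rw [hc₀]; have : 0 < (γ + 1) / (γ - 1) := div_pos (by linarith) (by linarith); linarith
    · rw [hc₀, div_mul_eq_mul_div, le_div_iff₀ (by linarith)]; linarith
  have hnorm : √(∑ j, u j ^ 2) ≤ √q / κ := by
    rw [le_div_iff₀ hκ, ← Real.sqrt_sq hκ.le,
      ← Real.sqrt_mul (Finset.sum_nonneg fun _ _ => sq_nonneg _)]
    exact Real.sqrt_le_sqrt (by linarith [hRE hcone])
  have ha : a ≤ √s * (√q / κ) :=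
    (sum_abs_le_sqrt_mul_sqrt_sum_sq u S).trans
      (mul_le_mul (Real.sqrt_le_sqrt (by exact_mod_cast hS)) hnorm (Real.sqrt_nonneg _)
        (Real.sqrt_nonneg _))
  calc lam / γ * ((1 + γ) * a - (γ - 1) * b) ≤ lam / γ * ((1 + γ) * (√s * (√q / κ))) := by
        gcongr
        linarith [mul_nonneg (sub_nonneg.2 hγ.le) hb,
          mul_le_mul_of_nonneg_left ha (by linarith : (0 : ℝ) ≤ 1 + γ)]
    _ = (1 + γ) / (γ * κ) * lam * √s * √q := by field_simp

lemma rowSparse.exists_finset {d s : ℕ} {A : Matrix (Fin d) (Fin d) ℝ} (hA : rowSparse s A)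
    (i : Fin d) : ∃ S : Finset (Fin d), S.card ≤ s ∧ ∀ j ∉ S, A i j = 0 := by
  classical
  refine ⟨Finset.univ.filter (A i · ≠ 0), by simpa [← Set.ncard_coe_finset] using hA i,
    fun j hj => ?_⟩
  simpa using hj

theorem stmt_8_general (d s : ℕ) (hsd : s ≤ d)
    (γ lam κ : ℝ) (hγ : 1 < γ) (hlam : 0 < lam) (hκ : 0 < κ)
    (c₀ : ℝ) (hc₀ : c₀ = (γ + 1) / (γ - 1))
    (Chat eps : Matrix (Fin d) (Fin d) ℝ) (hC : Chat.PosSemidef)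
    (hRE : ∀ u : Fin d → ℝ, inCone s c₀ u → κ ^ 2 * ∑ i, u i ^ 2 ≤ u ⬝ᵥ Chat *ᵥ u)
    (heps : ∀ i j, |eps i j| ≤ lam / γ)
    (A₀ : Matrix (Fin d) (Fin d) ℝ) (hA₀ : rowSparse s A₀)
    (Ahat : Matrix (Fin d) (Fin d) ℝ)
    (hmin : ∀ A : Matrix (Fin d) (Fin d) ℝ,
      lassoObj Chat eps A₀ lam Ahat ≤ lassoObj Chat eps A₀ lam A) :
    Real.sqrt (((Ahat - A₀) * Chat * (Ahat - A₀)ᵀ).trace) ≤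
      (1 + γ) / (γ * κ) * lam * Real.sqrt (d * s) := by
  choose S hScard hS using hA₀.exists_finset
  have hbasic := lasso_error_le_sum_rows hlam.le heps hmin S hS
  have hrows (i : Fin d) :=
    lasso_row_le_mul_sqrt hsd hγ hlam hκ hc₀ ((Ahat - A₀) i) (S i) (hScard i) (hRE ((Ahat - A₀) i))
  rw [trace_mul_mul_transpose_eq_sum] at hbasic ⊢
  have hsqrt := sqrt_sum_le_mul_sqrt_card
    (fun i => by simpa using hC.dotProduct_mulVec_nonneg ((Ahat - A₀) i)) (by positivity)
    (hbasic.trans ((Finset.sum_le_sum fun i _ => hrows i).trans_eq (Finset.mul_sum _ _ _).symm))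
  rw [Fintype.card_fin] at hsqrt
  rw [Real.sqrt_mul (Nat.cast_nonneg d)]
  exact hsqrt.trans_eq (by ring)

/-- empirical-norm error bound for the Lasso. -/
theorem stmt_8 (d s : ℕ) (hd : 1 ≤ d) (hs : 1 ≤ s) (hsd : s ≤ d)
    (γ lam κ : ℝ) (hγ : 1 < γ) (hlam : 0 < lam) (hκ : 0 < κ)
    (c₀ : ℝ) (hc₀ : c₀ = (γ + 1) / (γ - 1))
    (Chat eps : Matrix (Fin d) (Fin d) ℝ) (hC : Chat.PosSemidef)
    (hRE : ∀ u : Fin d → ℝ, inCone s c₀ u → κ ^ 2 * ∑ i, u i ^ 2 ≤ u ⬝ᵥ Chat *ᵥ u)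
    (heps : ∀ i j, |eps i j| ≤ lam / γ)
    (A₀ : Matrix (Fin d) (Fin d) ℝ) (hA₀ : rowSparse s A₀)
    (Ahat : Matrix (Fin d) (Fin d) ℝ)
    (hmin : ∀ A : Matrix (Fin d) (Fin d) ℝ,
      lassoObj Chat eps A₀ lam Ahat ≤ lassoObj Chat eps A₀ lam A) :
    Real.sqrt (((Ahat - A₀) * Chat * (Ahat - A₀)ᵀ).trace) ≤
      (1 + γ) / (γ * κ) * lam * Real.sqrt (d * s) :=
  stmt_8_general d s hsd γ lam κ hγ hlam hκ c₀ hc₀ Chat eps hC hRE heps A₀ hA₀ Ahat hmin
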